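/- For any s, t ∈ ℕ and any set X of density matrices on n qudits, D^s(I^t(X)) ⊆ I^t(D^s(X)); i.e., applying t insertions followed by s deletions always yields a state reachable by s deletions followed by t insertions. -/

import Mathlib

open Matrix
open scoped ComplexOrder

/-- Matrices on `n` qudits of level `l`. -/
abbrev QMat (l n : ℕ) := Matrix (Fin n → Fin l) (Fin n → Fin l) ℂ

/-- A quantum state on some finite number of qudits. -/
def QState (l : ℕ) := Σ n : ℕ, QMat l n

/-- Density matrix: positive semidefinite with trace 1. -/
def IsDensity {l n : ℕ} (ρ : QMat l n) : Prop := ρ.PosSemidef ∧ ρ.trace = 1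

def IsDensityS {l : ℕ} (ρ : QState l) : Prop := ρ.2.PosSemidef ∧ ρ.2.trace = 1

/-- Partial trace over the qudit at position `p`. -/
noncomputable def traceOut {l n : ℕ} (p : Fin (n + 1)) (ρ : QMat l (n + 1)) : QMat l n :=
  fun x y => ∑ z : Fin l, ρ (p.insertNth z x) (p.insertNth z y)

/-- Single deletion: all states obtained by tracing out one qudit. -/
def del1 {l : ℕ} : QState l → Set (QState l)
  | ⟨0, _⟩ => ∅
  | ⟨n + 1, ρ⟩ => { σ | ∃ p : Fin (n + 1), σ = ⟨n, traceOut p ρ⟩ }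

/-- Single insertion sphere: density matrices having `ρ` among their single deletions. -/
def ins1 {l : ℕ} (ρ : QState l) : Set (QState l) :=
  { σ | IsDensityS σ ∧ ρ ∈ del1 σ }

def delSet {l : ℕ} (X : Set (QState l)) : Set (QState l) := ⋃ ρ ∈ X, del1 ρ
def insSet {l : ℕ} (X : Set (QState l)) : Set (QState l) := ⋃ ρ ∈ X, ins1 ρ

/-- `s`-deletion errors. -/
def Dq {l : ℕ} : ℕ → Set (QState l) → Set (QState l)
  | 0, X => X
  | s + 1, X => delSet (Dq s X)

/-- `t`-insertion errors. -/
def Iq {l : ℕ} : ℕ → Set (QState l) → Set (QState l)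
  | 0, X => X
  | t + 1, X => insSet (Iq t X)

/-- Quantum indel distance. -/
noncomputable def qdist {l : ℕ} (ρ₁ ρ₂ : QState l) : ℕ :=
  sInf { k | ∃ s t : ℕ, s + t = k ∧ (Dq s {ρ₁} ∩ Dq t {ρ₂}).Nonempty }

/-!
Tracing out two distinct qudits commutes up to relabelling the positions
(`traceOut_traceOut_eq_swap`), so a deletion that follows an insertion either undoes it or can be
performed before it. In the first case the state `ρ` before the insertion is recovered from one of
its own deletions by reinserting the deleted qudit, which is possible as long as `ρ` is a density
matrix on at least one qudit; since partial traces preserve positivity and trace, this holds for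
every state of `D^k(X)` with `k < n`. Thus each single deletion can be pushed through the `t`
insertions, `D(I^t(Y)) ⊆ I^t(D(Y))`, and induction on `s` gives the theorem.
-/

theorem Fin.insertNth_insertNth_eq_swap {α : Type*} {n : ℕ} (j : Fin (n + 2)) (i : Fin (n + 1))
    (a b : α) (x : Fin n → α) :
    Fin.insertNth (α := fun _ => α) j a (Fin.insertNth i b x) =
      Fin.insertNth (α := fun _ => α) (j.succAbove i) b (Fin.insertNth (i.predAbove j) a x) := by
  refine (Fin.insertNth_eq_iff.2 ⟨by simp, ?_⟩).symm
  refine Fin.insertNth_eq_iff.2 ⟨?_, ?_⟩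
  · simp [Fin.removeNth, Fin.succAbove_succAbove_predAbove]
  · rw [← Fin.removeNth_removeNth_eq_swap]
    simp

theorem Fintype.sum_insertNth {α M : Type*} [Fintype α] [AddCommMonoid M] {n : ℕ}
    (p : Fin (n + 1)) (f : (Fin (n + 1) → α) → M) :
    ∑ u, f u = ∑ a, ∑ x : Fin n → α, f (p.insertNth a x) := by
  rw [← (Fin.insertNthEquiv (fun _ => α) p).sum_comp f, Fintype.sum_prod_type]
  rfl

section traceOut

variable {l n : ℕ}

theorem traceOut_eq_sum_submatrix (p : Fin (n + 1)) (ρ : QMat l (n + 1)) :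
    traceOut p ρ = ∑ z, ρ.submatrix (p.insertNth z) (p.insertNth z) := by
  ext x y
  simp [traceOut, Matrix.sum_apply]

theorem trace_traceOut (p : Fin (n + 1)) (ρ : QMat l (n + 1)) :
    (traceOut p ρ).trace = ρ.trace := by
  simp only [Matrix.trace, Matrix.diag, traceOut]
  rw [Fintype.sum_insertNth p (fun u => ρ u u), Finset.sum_comm]

theorem Matrix.PosSemidef.traceOut {ρ : QMat l (n + 1)} (h : ρ.PosSemidef) (p : Fin (n + 1)) :
    (traceOut p ρ).PosSemidef := by
  rw [traceOut_eq_sum_submatrix]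
  exact posSemidef_sum _ fun z _ => h.submatrix _

theorem traceOut_traceOut_eq_swap (j : Fin (n + 2)) (i : Fin (n + 1)) (ρ : QMat l (n + 2)) :
    traceOut i (traceOut j ρ) = traceOut (i.predAbove j) (traceOut (j.succAbove i) ρ) := by
  ext x y
  simp only [traceOut, Fin.insertNth_insertNth_eq_swap j i]
  exact Finset.sum_comm

end traceOut

section States

variable {l : ℕ}

theorem fst_eq_succ_of_mem_del1 {ρ σ : QState l} (h : σ ∈ del1 ρ) : ρ.1 = σ.1 + 1 := by
  obtain ⟨_ | n, ρ⟩ := ρ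
  · exact absurd h (Set.notMem_empty σ)
  · obtain ⟨p, rfl⟩ := h
    rfl

theorem del1_nonempty {ρ : QState l} (h : 0 < ρ.1) : (del1 ρ).Nonempty := by
  obtain ⟨_ | n, ρ⟩ := ρ
  · exact absurd h (lt_irrefl 0)
  · exact ⟨_, 0, rfl⟩

theorem IsDensityS.of_mem_del1 {ρ σ : QState l} (h : IsDensityS ρ) (hσ : σ ∈ del1 ρ) :
    IsDensityS σ := by
  obtain ⟨_ | n, ρ⟩ := ρ
  · exact absurd hσ (Set.notMem_empty σ)
  · obtain ⟨p, rfl⟩ := hσ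
    exact ⟨h.1.traceOut p, (trace_traceOut p ρ).trans h.2⟩

theorem eq_or_exists_mem_ins1_of_mem_del1 {ρ σ τ : QState l} (hσ : σ ∈ ins1 ρ)
    (hτ : τ ∈ del1 σ) : τ = ρ ∨ ∃ π ∈ del1 ρ, τ ∈ ins1 π := by
  obtain ⟨hσd, hρ⟩ := hσ
  have hτd : IsDensityS τ := hσd.of_mem_del1 hτ
  obtain ⟨_ | m, σ⟩ := σ
  · exact absurd hρ (Set.notMem_empty ρ)
  obtain ⟨p, rfl⟩ := hρ
  obtain ⟨q, rfl⟩ := hτ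
  obtain rfl | hpq := eq_or_ne p q
  · exact .inl rfl
  obtain ⟨i, rfl⟩ := Fin.exists_succAbove_eq hpq
  cases m with
  | zero => exact i.elim0
  | succ n =>
    refine .inr ⟨⟨n, traceOut i (traceOut q σ)⟩, ⟨i.predAbove q, ?_⟩, hτd, i, rfl⟩
    rw [traceOut_traceOut_eq_swap q i]

theorem isDensityS_and_pos_of_mem_Iq {t : ℕ} {Y : Set (QState l)}
    (hY : ∀ ρ ∈ Y, IsDensityS ρ ∧ 0 < ρ.1) : ∀ ρ ∈ Iq t Y, IsDensityS ρ ∧ 0 < ρ.1 := by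
  cases t with
  | zero => exact hY
  | succ t =>
    intro ρ hρ
    obtain ⟨σ, -, hρd, hσ⟩ := Set.mem_iUnion₂.mp hρ
    exact ⟨hρd, by rw [fst_eq_succ_of_mem_del1 hσ]; exact Nat.succ_pos _⟩

theorem delSet_mono {X Y : Set (QState l)} (h : X ⊆ Y) : delSet X ⊆ delSet Y :=
  Set.biUnion_subset_biUnion_left h

theorem delSet_Iq_subset {t : ℕ} {Y : Set (QState l)} (hY : ∀ ρ ∈ Y, IsDensityS ρ ∧ 0 < ρ.1) :
    delSet (Iq t Y) ⊆ Iq t (delSet Y) := by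
  induction t with
  | zero => exact subset_rfl
  | succ t ih =>
    intro τ hτ
    obtain ⟨σ, hσ, hτσ⟩ := Set.mem_iUnion₂.mp hτ
    obtain ⟨ρ, hρ, hσρ⟩ := Set.mem_iUnion₂.mp hσ
    have del1_subset : del1 ρ ⊆ Iq t (delSet Y) := fun π hπ => ih (Set.mem_biUnion hρ hπ)
    rcases eq_or_exists_mem_ins1_of_mem_del1 hσρ hτσ with rfl | ⟨π, hπ, hτπ⟩
    · obtain ⟨hτd, hτpos⟩ := isDensityS_and_pos_of_mem_Iq hY τ hρ
      obtain ⟨π, hπ⟩ := del1_nonempty hτpos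
      exact Set.mem_biUnion (del1_subset hπ) ⟨hτd, hπ⟩
    · exact Set.mem_biUnion (del1_subset hπ) hτπ

theorem fst_eq_and_isDensityS_of_mem_Dq {n s : ℕ} {X : Set (QState l)}
    (hX : ∀ ρ ∈ X, ρ.1 = n ∧ IsDensityS ρ) : ∀ ρ ∈ Dq s X, ρ.1 = n - s ∧ IsDensityS ρ := by
  induction s with
  | zero => exact hX
  | succ s ih =>
    intro ρ hρ
    obtain ⟨σ, hσ, hρσ⟩ := Set.mem_iUnion₂.mp hρ
    obtain ⟨hσn, hσd⟩ := ih σ hσ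
    have := fst_eq_succ_of_mem_del1 hρσ
    exact ⟨by omega, hσd.of_mem_del1 hρσ⟩

end States

/-- `t` insertions followed by `s` deletions is contained in `s` deletions
followed by `t` insertions: `D^s(I^t(X)) ⊆ I^t(D^s(X))`. -/
theorem dels_ins_subset_ins_dels {l n s t : ℕ} (hsn : s ≤ n) (X : Set (QState l))
    (hX : ∀ ρ ∈ X, ρ.1 = n ∧ IsDensityS ρ) :
    Dq s (Iq t X) ⊆ Iq t (Dq s X) := by
  induction s with
  | zero => exact subset_rfl
  | succ s ih =>
    have hDq : ∀ ρ ∈ Dq s X, IsDensityS ρ ∧ 0 < ρ.1 := fun ρ hρ => by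
      obtain ⟨hρn, hρd⟩ := fst_eq_and_isDensityS_of_mem_Dq hX ρ hρ
      exact ⟨hρd, by omega⟩
    calc Dq (s + 1) (Iq t X) = delSet (Dq s (Iq t X)) := rfl
      _ ⊆ delSet (Iq t (Dq s X)) := delSet_mono (ih (by omega))
      _ ⊆ Iq t (delSet (Dq s X)) := delSet_Iq_subset hDq
      _ = Iq t (Dq (s + 1) X) := rfl
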